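/- If θ : (0,∞) → [0,∞) is a monotone decreasing function with lim_{t→∞} θ(t) = 0, then for any m ≥ 0 there exists a monotone decreasing function s̄ : (0,∞) → (0,1) with lim_{t→∞} s̄(t) = 0 such that lim_{t→∞} θ(t·s̄(t)/2) · s̄(t)^{-m/2} = 0. -/

import Mathlib

open Filter Topology Set

/-!
Fix `p = 1/(m+1)` and take `s̄(t) = min (1/2) (max (θ(√t/2)^p) (1/√t))`. The term `1/√t` gives
`t·s̄(t) ≥ √t`, so `θ(t·s̄(t)/2) ≤ A := θ(√t/2)`, while `s̄(t) ≥ A^p` gives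
`s̄(t)^{-m/2} ≤ A^{-pm/2}`. Hence the product is at most `A^{1-pm/2}`, which tends to `0`
because `pm/2 < 1`.
-/

theorem AntitoneOn.le_of_tendsto_atTop {f : ℝ → ℝ} {a l : ℝ} (hf : AntitoneOn f (Ioi a))
    (hlim : Tendsto f atTop (𝓝 l)) {t : ℝ} (ht : a < t) : l ≤ f t :=
  le_of_tendsto hlim <| (eventually_ge_atTop t).mono fun _ hu => hf ht (ht.trans_le hu) hu

theorem mul_rpow_neg_le_rpow {x A s p k : ℝ} (hx : 0 ≤ x) (hxA : x ≤ A) (hs : 0 < s)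
    (hAs : A ^ p ≤ s) (hk : 0 ≤ k) : x * s ^ (-k) ≤ A ^ (1 - p * k) := by
  rcases (hx.trans hxA).eq_or_lt with rfl | hA
  · rw [le_antisymm hxA hx, zero_mul]
    exact Real.rpow_nonneg le_rfl _
  calc x * s ^ (-k) ≤ A * (A ^ p) ^ (-k) :=
        mul_le_mul hxA (Real.rpow_le_rpow_of_nonpos (by positivity) hAs (neg_nonpos.mpr hk))
          (by positivity) hA.le
    _ = A ^ (1 - p * k) := by
        rw [← Real.rpow_mul hA.le, sub_eq_add_neg, Real.rpow_add hA, Real.rpow_one,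
          neg_mul_eq_mul_neg]

noncomputable def decayScale (θ : ℝ → ℝ) (p t : ℝ) : ℝ :=
  min (1 / 2) (max (θ (√t / 2) ^ p) (√t)⁻¹)

namespace decayScale

variable {θ : ℝ → ℝ} {p t : ℝ}

theorem mem_Ioo (ht : 0 < t) : decayScale θ p t ∈ Ioo 0 1 :=
  ⟨lt_min (by norm_num) ((inv_pos.mpr (Real.sqrt_pos.mpr ht)).trans_le (le_max_right _ _)),
    (min_le_left _ _).trans_lt (by norm_num)⟩

theorem rpow_le (h : θ (√t / 2) ^ p ≤ 1 / 2) : θ (√t / 2) ^ p ≤ decayScale θ p t :=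
  le_min h (le_max_left _ _)

theorem sqrt_le_mul (ht : 4 ≤ t) : √t ≤ t * decayScale θ p t := by
  have ht0 : 0 < t := by linarith
  have hsqrt : 2 ≤ √t := Real.le_sqrt_of_sq_le (by linarith)
  have hinv : (√t)⁻¹ ≤ decayScale θ p t :=
    le_min (by rw [one_div]; exact inv_anti₀ two_pos hsqrt) (le_max_right _ _)
  calc √t = t * (√t)⁻¹ := by rw [← div_eq_mul_inv, Real.div_sqrt]
    _ ≤ t * decayScale θ p t := mul_le_mul_of_nonneg_left hinv ht0.le

theorem antitoneOn (hmono : AntitoneOn θ (Ioi 0)) (hnn : ∀ t, 0 < t → 0 ≤ θ t) (hp : 0 ≤ p) :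
    AntitoneOn (decayScale θ p) (Ioi 0) := by
  intro a (ha : 0 < a) b (hb : 0 < b) hab
  have hsqrt : √a ≤ √b := Real.sqrt_le_sqrt hab
  have hθ : θ (√b / 2) ≤ θ (√a / 2) := hmono (by simp [mem_Ioi, ha]) (by simp [mem_Ioi, hb])
    (div_le_div_of_nonneg_right hsqrt zero_le_two)
  have hθp : θ (√b / 2) ^ p ≤ θ (√a / 2) ^ p :=
    Real.rpow_le_rpow (hnn _ (by positivity)) hθ hp
  exact min_le_min le_rfl (max_le_max hθp (inv_anti₀ (Real.sqrt_pos.mpr ha) hsqrt))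

theorem tendsto_rpow_comp_sqrt {q : ℝ} (hlim : Tendsto θ atTop (𝓝 0)) (hq : 0 < q) :
    Tendsto (fun t => θ (√t / 2) ^ q) atTop (𝓝 0) := by
  have := (hlim.comp (Real.tendsto_sqrt_atTop.atTop_div_const two_pos)).rpow_const (Or.inr hq.le)
  rwa [Real.zero_rpow hq.ne'] at this

theorem tendsto_zero (hlim : Tendsto θ atTop (𝓝 0)) (hp : 0 < p) :
    Tendsto (decayScale θ p) atTop (𝓝 0) := by
  have hmax : Tendsto (fun t => max (θ (√t / 2) ^ p) (√t)⁻¹) atTop (𝓝 0) := by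
    simpa using (tendsto_rpow_comp_sqrt hlim hp).max
      (tendsto_inv_atTop_zero.comp Real.tendsto_sqrt_atTop)
  refine squeeze_zero' ?_ (Eventually.of_forall fun _ => min_le_right _ _) hmax
  filter_upwards [eventually_gt_atTop 0] with t ht using (mem_Ioo ht).1.le

theorem tendsto_mul_rpow_neg (hmono : AntitoneOn θ (Ioi 0)) (hnn : ∀ t, 0 < t → 0 ≤ θ t)
    (hlim : Tendsto θ atTop (𝓝 0)) (hp : 0 < p) {k : ℝ} (hk : 0 ≤ k) (hpk : p * k < 1) :
    Tendsto (fun t => θ (t * decayScale θ p t / 2) * decayScale θ p t ^ (-k)) atTop (𝓝 0) := by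
  refine squeeze_zero' ?_ ?_ (tendsto_rpow_comp_sqrt hlim (sub_pos.mpr hpk))
  · filter_upwards [eventually_gt_atTop 0] with t ht
    have hs : 0 < decayScale θ p t := (mem_Ioo ht).1
    exact mul_nonneg (hnn _ (by positivity)) (Real.rpow_nonneg hs.le _)
  · filter_upwards [eventually_ge_atTop 4, (tendsto_rpow_comp_sqrt hlim hp).eventually
      (eventually_le_nhds (by norm_num : (0 : ℝ) < 1 / 2))] with t ht hsmall
    have ht0 : 0 < t := by linarith
    have hs : 0 < decayScale θ p t := (mem_Ioo ht0).1
    have hθ : θ (t * decayScale θ p t / 2) ≤ θ (√t / 2) :=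
      hmono (by simp [mem_Ioi, ht0]) (by simp [mem_Ioi]; positivity)
        (div_le_div_of_nonneg_right (sqrt_le_mul ht) zero_le_two)
    exact mul_rpow_neg_le_rpow (hnn _ (by positivity)) hθ hs (rpow_le hsmall) hk

end decayScale

theorem stmt_0_general (θ : ℝ → ℝ) (hmono : AntitoneOn θ (Set.Ioi (0 : ℝ)))
    (hlim : Tendsto θ atTop (nhds 0)) (m : ℝ) (hm : 0 ≤ m) :
    ∃ sbar : ℝ → ℝ, AntitoneOn sbar (Set.Ioi (0 : ℝ)) ∧
      (∀ t, 0 < t → sbar t ∈ Set.Ioo (0 : ℝ) 1) ∧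
      Tendsto sbar atTop (nhds 0) ∧
      Tendsto (fun t => θ (t * sbar t / 2) * (sbar t) ^ (-(m / 2)))
        atTop (nhds 0) := by
  have hnn : ∀ t, 0 < t → 0 ≤ θ t := fun _ ht => hmono.le_of_tendsto_atTop hlim ht
  have hm1 : 0 < m + 1 := by linarith
  have hp : 0 < (m + 1)⁻¹ := inv_pos.mpr hm1
  have hpm : (m + 1)⁻¹ * (m / 2) < 1 := by
    rw [inv_mul_lt_iff₀ hm1]
    linarith
  exact ⟨decayScale θ (m + 1)⁻¹, decayScale.antitoneOn hmono hnn hp.le,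
    fun _ => decayScale.mem_Ioo, decayScale.tendsto_zero hlim hp,
    decayScale.tendsto_mul_rpow_neg hmono hnn hlim hp (by positivity) hpm⟩

/-- If `θ : (0,∞) → [0,∞)` is monotone decreasing with `θ(t) → 0` as `t → ∞`, then for any
`m ≥ 0` there is a monotone decreasing `s̄ : (0,∞) → (0,1)` with `s̄(t) → 0` such that
`θ(t·s̄(t)/2) · s̄(t)^{-m/2} → 0` as `t → ∞`. -/
theorem stmt_0 (θ : ℝ → ℝ) (hmono : AntitoneOn θ (Set.Ioi (0 : ℝ)))
    (hnn : ∀ t, 0 < t → 0 ≤ θ t)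
    (hlim : Tendsto θ atTop (nhds 0)) (m : ℝ) (hm : 0 ≤ m) :
    ∃ sbar : ℝ → ℝ, AntitoneOn sbar (Set.Ioi (0 : ℝ)) ∧
      (∀ t, 0 < t → sbar t ∈ Set.Ioo (0 : ℝ) 1) ∧
      Tendsto sbar atTop (nhds 0) ∧
      Tendsto (fun t => θ (t * sbar t / 2) * (sbar t) ^ (-(m / 2)))
        atTop (nhds 0) :=
  stmt_0_general θ hmono hlim m hm
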